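/- arXiv:1703.07968 — 2 statements merged into one kernel-verified Lean document; each statement's English description precedes it below -/
import Mathlib

section
/- Let g : ℝ → ℝ be a convex function with g(0) = 0. Then the function h defined by h(z) = g(z/2) − g(z)/2 is nonincreasing on the positive reals; that is, for all real numbers 0 < z₁ ≤ z₂, one has g(z₂/2) − g(z₂)/2 ≤ g(z₁/2) − g(z₁)/2. -/
theorem ConvexOn.slope_le_slope_of_le_of_le {𝕜 : Type*} [Field 𝕜] [LinearOrder 𝕜]
    [IsStrictOrderedRing 𝕜] {s : Set 𝕜} {f : 𝕜 → 𝕜} (hf : ConvexOn 𝕜 s f) {a b c d : 𝕜}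
    (ha : a ∈ s) (hb : b ∈ s) (hc : c ∈ s) (hd : d ∈ s) (hab : a < b) (hcd : c < d)
    (hac : a ≤ c) (hbd : b ≤ d) : slope f a b ≤ slope f c d :=
  calc slope f a b
      ≤ slope f a d := hf.slope_mono ha ⟨hb, hab.ne'⟩ ⟨hd, (hab.trans_le hbd).ne'⟩ hbd
    _ = slope f d a := slope_comm f a d
    _ ≤ slope f d c := hf.slope_mono hd ⟨ha, (hab.trans_le hbd).ne⟩ ⟨hc, hcd.ne⟩ hac
    _ = slope f c d := slope_comm f d c

/-- Since `z₁ > 0`, the chord of `g` over `[z₁/2, z₂/2]` lies to the left of the chord over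
`[z₁, z₂]`, so its slope is smaller; clearing denominators gives the inequality. -/
theorem convex_half_diff_antitone_general (g : ℝ → ℝ) (hg : ConvexOn ℝ Set.univ g)
    (z₁ z₂ : ℝ) (hz₁ : 0 < z₁) (h12 : z₁ ≤ z₂) :
    g (z₂ / 2) - g z₂ / 2 ≤ g (z₁ / 2) - g z₁ / 2 := by
  rcases h12.eq_or_lt with rfl | h12
  · rfl
  have hslope : slope g (z₁ / 2) (z₂ / 2) ≤ slope g z₁ z₂ :=
    hg.slope_le_slope_of_le_of_le trivial trivial trivial trivial (by linarith) h12
      (by linarith) (by linarith)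
  have hhalf : z₂ / 2 - z₁ / 2 = (z₂ - z₁) / 2 := by ring
  rw [slope_def_field, slope_def_field, hhalf, div_div_eq_mul_div,
    div_le_div_iff_of_pos_right (sub_pos.mpr h12)] at hslope
  linarith

theorem convex_half_diff_antitone (g : ℝ → ℝ) (hg : ConvexOn ℝ Set.univ g)
    (hg0 : g 0 = 0) (z₁ z₂ : ℝ) (hz₁ : 0 < z₁) (h12 : z₁ ≤ z₂) :
    g (z₂ / 2) - g z₂ / 2 ≤ g (z₁ / 2) - g z₁ / 2 :=
  convex_half_diff_antitone_general g hg z₁ z₂ hz₁ h12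
end

section
/- Let g : ℝ → ℝ be a convex function with g(0) = 0. Let x₁, x₂, x₃ be positive real numbers such that x₁ + x₂ − x₃ ≥ 0 and xᵢ ≤ x₁ + x₂ − x₃ for each i ∈ {1, 2, 3}. Then g(x₁ + x₂ − x₃) ≥ g(x₁) + g(x₂) − g(x₃). -/
/-! Writing `s = x₁ + x₂ - x₃`, the hypotheses put `x₁` and `x₂` in `[x₃, s]`, and
`x₁ + x₂ = x₃ + s`. So `x₁ = p x₃ + q s` and `x₂ = q x₃ + p s` with the same weights swapped;
adding the two convexity inequalities gives `g x₁ + g x₂ ≤ g x₃ + g s`. -/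

open Set

theorem ConvexOn.map_combo_add_map_combo_swap_le {𝕜 E β : Type*} [Semiring 𝕜] [PartialOrder 𝕜]
    [AddCommMonoid E] [SMul 𝕜 E] [AddCommMonoid β] [PartialOrder β] [IsOrderedAddMonoid β]
    [Module 𝕜 β] {s : Set E} {f : E → β} (hf : ConvexOn 𝕜 s f) {a b : E} (ha : a ∈ s)
    (hb : b ∈ s) {p q : 𝕜} (hp : 0 ≤ p) (hq : 0 ≤ q) (hpq : p + q = 1) :
    f (p • a + q • b) + f (q • a + p • b) ≤ f a + f b :=
  calc f (p • a + q • b) + f (q • a + p • b)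
      ≤ (p • f a + q • f b) + (q • f a + p • f b) :=
        add_le_add (hf.2 ha hb hp hq hpq) (hf.2 ha hb hq hp (by rwa [add_comm]))
    _ = f a + f b := by
        rw [add_add_add_comm, ← add_smul, ← add_smul, add_comm q p, hpq, one_smul, one_smul]

theorem ConvexOn.map_add_map_sub_le_of_mem_Icc {s : Set ℝ} {f : ℝ → ℝ} (hf : ConvexOn ℝ s f)
    {a b x : ℝ} (ha : a ∈ s) (hb : b ∈ s) (hx : x ∈ Icc a b) :
    f x + f (a + b - x) ≤ f a + f b := by
  obtain ⟨p, q, hp, hq, hpq, rfl⟩ : x ∈ segment ℝ a b := by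
    rwa [segment_eq_Icc (hx.1.trans hx.2)]
  have hswap : a + b - (p • a + q • b) = q • a + p • b := by
    simp only [smul_eq_mul]
    linear_combination -(a + b) * hpq
  rw [hswap]
  exact hf.map_combo_add_map_combo_swap_le ha hb hp hq hpq

theorem convex_three_term_exchange_general (g : ℝ → ℝ) (hg : ConvexOn ℝ Set.univ g)
    (x₁ x₂ x₃ : ℝ)
    (h₁ : x₁ ≤ x₁ + x₂ - x₃) (h₂ : x₂ ≤ x₁ + x₂ - x₃) :
    g (x₁ + x₂ - x₃) ≥ g x₁ + g x₂ - g x₃ := by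
  have hx₁_mem : x₁ ∈ Icc x₃ (x₁ + x₂ - x₃) := ⟨by linarith, h₁⟩
  have hexchange := hg.map_add_map_sub_le_of_mem_Icc (mem_univ _) (mem_univ _) hx₁_mem
  rw [show x₃ + (x₁ + x₂ - x₃) - x₁ = x₂ by ring] at hexchange
  linarith

theorem convex_three_term_exchange (g : ℝ → ℝ) (hg : ConvexOn ℝ Set.univ g)
    (hg0 : g 0 = 0) (x₁ x₂ x₃ : ℝ) (hx₁ : 0 < x₁) (hx₂ : 0 < x₂) (hx₃ : 0 < x₃)
    (hsum : 0 ≤ x₁ + x₂ - x₃)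
    (h₁ : x₁ ≤ x₁ + x₂ - x₃) (h₂ : x₂ ≤ x₁ + x₂ - x₃) (h₃ : x₃ ≤ x₁ + x₂ - x₃) :
    g (x₁ + x₂ - x₃) ≥ g x₁ + g x₂ - g x₃ :=
  convex_three_term_exchange_general g hg x₁ x₂ x₃ h₁ h₂
end
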